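/- arXiv:2502.07916 — 2 statements merged into one kernel-verified Lean document; each statement's English description precedes it below -/
import Mathlib

section
/- Let q be a prime power, G, H ∈ 𝔽_q^{k×n}, m a positive integer, and let G', H' be obtained from G and H by the Construction (with the same m). If (G, H) is in PCE, then (G', H') is in SPCE, and also (G', H') is in LCE. -/
open scoped Classical

/-- A permutation matrix: exactly one `1` in each row and column, `0` elsewhere. -/
def IsPermMatrix {n : ℕ} {F : Type*} [Field F] (P : Matrix (Fin n) (Fin n) F) : Prop :=
  ∃ σ : Equiv.Perm (Fin n), ∀ i j, P i j = if i = σ j then 1 else 0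

/-- A signed permutation matrix: exactly one nonzero entry in each row and column,
each equal to `1` or `-1`. -/
def IsSignedPermMatrix {n : ℕ} {F : Type*} [Field F] (P : Matrix (Fin n) (Fin n) F) : Prop :=
  ∃ (σ : Equiv.Perm (Fin n)) (ε : Fin n → F),
    (∀ j, ε j = 1 ∨ ε j = -1) ∧ ∀ i j, P i j = if i = σ j then ε j else 0

/-- A monomial matrix: exactly one nonzero entry in each row and column. -/
def IsMonomialMatrix {n : ℕ} {F : Type*} [Field F] (P : Matrix (Fin n) (Fin n) F) : Prop :=
  ∃ (σ : Equiv.Perm (Fin n)) (d : Fin n → F),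
    (∀ j, d j ≠ 0) ∧ ∀ i j, P i j = if i = σ j then d j else 0

/-- Permutation Code Equivalence. -/
def PCE {k n : ℕ} {F : Type*} [Field F] (G H : Matrix (Fin k) (Fin n) F) : Prop :=
  ∃ (S : Matrix (Fin k) (Fin k) F) (P : Matrix (Fin n) (Fin n) F),
    IsUnit S ∧ IsPermMatrix P ∧ S * G * P = H

/-- Signed Permutation Code Equivalence. -/
def SPCE {k n : ℕ} {F : Type*} [Field F] (G H : Matrix (Fin k) (Fin n) F) : Prop :=
  ∃ (S : Matrix (Fin k) (Fin k) F) (P : Matrix (Fin n) (Fin n) F),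
    IsUnit S ∧ IsSignedPermMatrix P ∧ S * G * P = H

/-- Linear Code Equivalence. -/
def LCE {k n : ℕ} {F : Type*} [Field F] (G H : Matrix (Fin k) (Fin n) F) : Prop :=
  ∃ (S : Matrix (Fin k) (Fin k) F) (P : Matrix (Fin n) (Fin n) F),
    IsUnit S ∧ IsMonomialMatrix P ∧ S * G * P = H

/-- The number of column indices `j` such that the `j`-th column of `A` equals `c`. -/
noncomputable def colCount {k n : ℕ} {F : Type*} [Field F]
    (A : Matrix (Fin k) (Fin n) F) (c : Fin k → F) : ℕ :=
  (Finset.univ.filter fun j : Fin n => (fun i => A i j) = c).card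

/-- `m_A`: the maximum number of times a single column appears among the columns of `A`. -/
noncomputable def maxColCount {k n : ℕ} {F : Type*} [Field F] [Fintype F]
    (A : Matrix (Fin k) (Fin n) F) : ℕ :=
  Finset.univ.sup fun c : Fin k → F => colCount A c

/-- The Construction: `A' = [A'_1 | A'_2 | A'_3]` of size `(k+1) × (n + 2nm + 1)`, where
`A'_1` is `A` with a row of ones appended, `A'_2` is `Â` (each column of `A` repeated `m`
consecutive times) with a row of zeros appended, and `A'_3` has last row all ones and zeros
elsewhere. -/
def construct {k n : ℕ} {F : Type*} [Field F] (A : Matrix (Fin k) (Fin n) F) (m : ℕ) :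
    Matrix (Fin (k + 1)) (Fin (n + 2 * (n * m) + 1)) F :=
  fun i j =>
    if hj1 : (j : ℕ) < n then
      -- block A'_1
      if hi : (i : ℕ) < k then A ⟨i, hi⟩ ⟨j, hj1⟩ else 1
    else if hj2 : (j : ℕ) < n + n * m then
      -- block A'_2
      if hi : (i : ℕ) < k then
        A ⟨i, hi⟩ ⟨((j : ℕ) - n) / m, by
          have hm : 0 < m := by
            rcases Nat.eq_zero_or_pos m with h | h
            · subst h; omega
            · exact h
          exact (Nat.div_lt_iff_lt_mul hm).mpr (by omega)⟩
      else 0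
    else
      -- block A'_3
      if (i : ℕ) < k then 0 else 1


/-! ### Auxiliary material for `stmt5` -/

section StmtAux

variable {k n m : ℕ} {F : Type*} [Field F]

private lemma middle_lt {n m s r : ℕ} (hs : s < n) (hr : r < m) : s * m + r < n * m := by
  have h1 : (s + 1) * m ≤ n * m := Nat.mul_le_mul_right m hs
  have h2 : (s + 1) * m = s * m + m := by ring
  omega

/-- The column permutation used in the construction. -/
def permF (n m : ℕ) (hm : 0 < m) (σ : Equiv.Perm (Fin n)) :
    Fin (n + 2 * (n * m) + 1) → Fin (n + 2 * (n * m) + 1) := fun j =>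
  if h : (j : ℕ) < n then
    ⟨(σ ⟨j, h⟩ : ℕ), by have := (σ ⟨j, h⟩).isLt; omega⟩
  else if h2 : (j : ℕ) < n + n * m then
    ⟨n + ((σ ⟨((j : ℕ) - n) / m, (Nat.div_lt_iff_lt_mul hm).mpr (by omega)⟩ : Fin n) : ℕ) * m
        + ((j : ℕ) - n) % m, by
      have hs := (σ ⟨((j : ℕ) - n) / m, (Nat.div_lt_iff_lt_mul hm).mpr (by omega)⟩).isLt
      have hr : ((j : ℕ) - n) % m < m := Nat.mod_lt _ hm
      have := middle_lt hs hr
      omega⟩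
  else j

lemma permF_coe_b1 (hm : 0 < m) (σ : Equiv.Perm (Fin n)) (j : Fin (n + 2 * (n * m) + 1))
    (hj : (j : ℕ) < n) : ((permF n m hm σ j : ℕ)) = (σ ⟨j, hj⟩ : ℕ) := by
  simp only [permF]
  rw [dif_pos hj]

lemma permF_coe_b2 (hm : 0 < m) (σ : Equiv.Perm (Fin n)) (j : Fin (n + 2 * (n * m) + 1))
    (hj1 : ¬ (j : ℕ) < n) (hj2 : (j : ℕ) < n + n * m)
    (hb : ((j : ℕ) - n) / m < n) :
    ((permF n m hm σ j : ℕ))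
      = n + (σ ⟨((j : ℕ) - n) / m, hb⟩ : ℕ) * m + ((j : ℕ) - n) % m := by
  simp only [permF]
  rw [dif_neg hj1, dif_pos hj2]

lemma permF_b3 (hm : 0 < m) (σ : Equiv.Perm (Fin n)) (j : Fin (n + 2 * (n * m) + 1))
    (hj2 : ¬ (j : ℕ) < n + n * m) : permF n m hm σ j = j := by
  have hj1 : ¬ (j : ℕ) < n := by omega
  simp only [permF]
  rw [dif_neg hj1, dif_neg hj2]

lemma permF_inv (hm : 0 < m) (σ : Equiv.Perm (Fin n)) (j : Fin (n + 2 * (n * m) + 1)) :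
    permF n m hm σ⁻¹ (permF n m hm σ j) = j := by
  by_cases hj1 : (j : ℕ) < n
  · have hv : ((permF n m hm σ j : ℕ)) = (σ ⟨j, hj1⟩ : ℕ) := permF_coe_b1 hm σ j hj1
    have hvn : ((permF n m hm σ j : ℕ)) < n := by rw [hv]; exact (σ ⟨j, hj1⟩).isLt
    apply Fin.ext
    rw [permF_coe_b1 hm σ⁻¹ _ hvn]
    have h2 : (⟨((permF n m hm σ j : ℕ)), hvn⟩ : Fin n) = σ ⟨j, hj1⟩ := Fin.ext hv
    rw [h2, ← Equiv.Perm.mul_apply, inv_mul_cancel, Equiv.Perm.one_apply]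
  · by_cases hj2 : (j : ℕ) < n + n * m
    · have hcb : ((j : ℕ) - n) / m < n := (Nat.div_lt_iff_lt_mul hm).mpr (by omega)
      set c : Fin n := ⟨((j : ℕ) - n) / m, hcb⟩ with hcdef
      have hv : ((permF n m hm σ j : ℕ)) = n + (σ c : ℕ) * m + ((j : ℕ) - n) % m :=
        permF_coe_b2 hm σ j hj1 hj2 hcb
      have hs : (σ c : ℕ) < n := (σ c).isLt
      have hr : ((j : ℕ) - n) % m < m := Nat.mod_lt _ hm
      have hml := middle_lt hs hr
      have hv1 : ¬ ((permF n m hm σ j : ℕ)) < n := by omega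
      have hv2 : ((permF n m hm σ j : ℕ)) < n + n * m := by omega
      have hdiv : ((permF n m hm σ j : ℕ) - n) / m = (σ c : ℕ) := by
        have h1 : (permF n m hm σ j : ℕ) - n = ((j : ℕ) - n) % m + (σ c : ℕ) * m := by omega
        rw [h1, Nat.add_mul_div_right _ _ hm, Nat.div_eq_of_lt hr, Nat.zero_add]
      have hmod : ((permF n m hm σ j : ℕ) - n) % m = ((j : ℕ) - n) % m := by
        have h1 : (permF n m hm σ j : ℕ) - n = ((j : ℕ) - n) % m + (σ c : ℕ) * m := by omega
        rw [h1, Nat.add_mul_mod_self_right, Nat.mod_eq_of_lt hr]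
      have hdb : ((permF n m hm σ j : ℕ) - n) / m < n := by rw [hdiv]; exact hs
      have hv' : ((permF n m hm σ⁻¹ (permF n m hm σ j) : ℕ))
          = n + (σ⁻¹ ⟨((permF n m hm σ j : ℕ) - n) / m, hdb⟩ : ℕ) * m
            + ((permF n m hm σ j : ℕ) - n) % m :=
        permF_coe_b2 hm σ⁻¹ _ hv1 hv2 hdb
      have hfix : (⟨((permF n m hm σ j : ℕ) - n) / m, hdb⟩ : Fin n) = σ c := Fin.ext hdiv
      rw [hfix, ← Equiv.Perm.mul_apply, inv_mul_cancel, Equiv.Perm.one_apply, hmod] at hv'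
      apply Fin.ext
      rw [hv']
      have hdm := Nat.div_add_mod ((j : ℕ) - n) m
      have hck : (c : ℕ) * m = m * (((j : ℕ) - n) / m) := by
        rw [show (c : ℕ) = ((j : ℕ) - n) / m from rfl, Nat.mul_comm]
      omega
    · rw [permF_b3 hm σ j hj2, permF_b3 hm σ⁻¹ j hj2]

/-- The column permutation as an `Equiv.Perm`. -/
def permE (n m : ℕ) (hm : 0 < m) (σ : Equiv.Perm (Fin n)) :
    Equiv.Perm (Fin (n + 2 * (n * m) + 1)) where
  toFun := permF n m hm σ
  invFun := permF n m hm σ⁻¹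
  left_inv j := permF_inv hm σ j
  right_inv j := by have := permF_inv hm σ⁻¹ j; rwa [inv_inv] at this

/-- Extend `S` by appending a `1` on the diagonal. -/
def liftS (S : Matrix (Fin k) (Fin k) F) : Matrix (Fin (k + 1)) (Fin (k + 1)) F :=
  fun i l =>
    if hi : (i : ℕ) < k then (if hl : (l : ℕ) < k then S ⟨i, hi⟩ ⟨l, hl⟩ else 0)
    else (if (l : ℕ) < k then 0 else 1)

lemma liftS_castSucc (S : Matrix (Fin k) (Fin k) F) (i : Fin (k + 1)) (hi : (i : ℕ) < k)
    (t : Fin k) : liftS S i (Fin.castSucc t) = S ⟨i, hi⟩ t := by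
  simp [liftS, hi]

lemma liftS_last (S : Matrix (Fin k) (Fin k) F) (i : Fin (k + 1)) (hi : (i : ℕ) < k) :
    liftS S i (Fin.last k) = 0 := by
  simp [liftS, hi]

lemma liftS_castSucc' (S : Matrix (Fin k) (Fin k) F) (i : Fin (k + 1)) (hi : ¬ (i : ℕ) < k)
    (t : Fin k) : liftS S i (Fin.castSucc t) = 0 := by
  simp [liftS, hi]

lemma liftS_last' (S : Matrix (Fin k) (Fin k) F) (i : Fin (k + 1)) (hi : ¬ (i : ℕ) < k) :
    liftS S i (Fin.last k) = 1 := by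
  simp [liftS, hi]

lemma liftS_mul (S T : Matrix (Fin k) (Fin k) F) : liftS S * liftS T = liftS (S * T) := by
  ext i l
  rw [Matrix.mul_apply, Fin.sum_univ_castSucc]
  by_cases hi : (i : ℕ) < k
  · rw [liftS_last S i hi, zero_mul, add_zero]
    by_cases hl : (l : ℕ) < k
    · have hterm : ∀ t : Fin k, liftS S i (Fin.castSucc t) * liftS T (Fin.castSucc t) l
          = S ⟨i, hi⟩ t * T t ⟨l, hl⟩ := by
        intro t
        rw [liftS_castSucc S i hi t]
        congr 1
        simp [liftS, hl]
      rw [Finset.sum_congr rfl fun t _ => hterm t]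
      simp [liftS, hi, hl, Matrix.mul_apply]
    · have hterm : ∀ t : Fin k, liftS S i (Fin.castSucc t) * liftS T (Fin.castSucc t) l = 0 := by
        intro t
        have h0 : liftS T (Fin.castSucc t) l = 0 := by simp [liftS, hl]
        rw [h0, mul_zero]
      rw [Finset.sum_congr rfl fun t _ => hterm t]
      simp [liftS, hi, hl]
  · have h0 : ∀ t : Fin k, liftS S i (Fin.castSucc t) * liftS T (Fin.castSucc t) l = 0 := by
      intro t; rw [liftS_castSucc' S i hi t, zero_mul]
    rw [Finset.sum_congr rfl fun t _ => h0 t, liftS_last' S i hi, one_mul]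
    by_cases hl : (l : ℕ) < k
    · simp [liftS, hi, hl]
    · simp [liftS, hi, hl]

lemma liftS_one : liftS (1 : Matrix (Fin k) (Fin k) F) = 1 := by
  ext i l
  by_cases hi : (i : ℕ) < k <;> by_cases hl : (l : ℕ) < k
  · simp [liftS, hi, hl, Matrix.one_apply, Fin.ext_iff]
  · have hne : i ≠ l := by intro h; rw [h] at hi; exact hl hi
    simp [liftS, hi, hl, Matrix.one_apply, hne]
  · have hne : i ≠ l := by intro h; rw [h] at hi; exact hi hl
    simp [liftS, hi, hl, Matrix.one_apply, hne]
  · have heq : i = l := by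
      apply Fin.ext
      have h1 := i.isLt; have h2 := l.isLt
      omega
    simp [liftS, hi, hl, Matrix.one_apply, heq]

lemma liftS_isUnit (S : Matrix (Fin k) (Fin k) F) (hS : IsUnit S) : IsUnit (liftS S) := by
  obtain ⟨T, hT1, hT2⟩ := isUnit_iff_exists.mp hS
  exact isUnit_iff_exists.mpr ⟨liftS T,
    by rw [liftS_mul, hT1, liftS_one], by rw [liftS_mul, hT2, liftS_one]⟩

lemma construct_b1 (A : Matrix (Fin k) (Fin n) F) (i : Fin (k + 1))
    (j : Fin (n + 2 * (n * m) + 1)) (hi : (i : ℕ) < k) (hj : (j : ℕ) < n) :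
    construct A m i j = A ⟨i, hi⟩ ⟨j, hj⟩ := by
  simp only [construct]
  rw [dif_pos hj, dif_pos hi]

lemma construct_b1' (A : Matrix (Fin k) (Fin n) F) (i : Fin (k + 1))
    (j : Fin (n + 2 * (n * m) + 1)) (hi : ¬ (i : ℕ) < k) (hj : (j : ℕ) < n) :
    construct A m i j = 1 := by
  simp only [construct]
  rw [dif_pos hj, dif_neg hi]

lemma construct_b2 (A : Matrix (Fin k) (Fin n) F) (i : Fin (k + 1))
    (j : Fin (n + 2 * (n * m) + 1)) (hi : (i : ℕ) < k) (hj1 : ¬ (j : ℕ) < n)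
    (hj2 : (j : ℕ) < n + n * m) (hb : ((j : ℕ) - n) / m < n) :
    construct A m i j = A ⟨i, hi⟩ ⟨((j : ℕ) - n) / m, hb⟩ := by
  simp only [construct]
  rw [dif_neg hj1, dif_pos hj2, dif_pos hi]

lemma construct_b2' (A : Matrix (Fin k) (Fin n) F) (i : Fin (k + 1))
    (j : Fin (n + 2 * (n * m) + 1)) (hi : ¬ (i : ℕ) < k) (hj1 : ¬ (j : ℕ) < n)
    (hj2 : (j : ℕ) < n + n * m) : construct A m i j = 0 := by
  simp only [construct]
  rw [dif_neg hj1, dif_pos hj2, dif_neg hi]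

lemma construct_b3 (A : Matrix (Fin k) (Fin n) F) (i : Fin (k + 1))
    (j : Fin (n + 2 * (n * m) + 1)) (hi : (i : ℕ) < k) (hj2 : ¬ (j : ℕ) < n + n * m) :
    construct A m i j = 0 := by
  have hj1 : ¬ (j : ℕ) < n := by omega
  simp only [construct]
  rw [dif_neg hj1, dif_neg hj2, if_pos hi]

lemma construct_b3' (A : Matrix (Fin k) (Fin n) F) (i : Fin (k + 1))
    (j : Fin (n + 2 * (n * m) + 1)) (hi : ¬ (i : ℕ) < k) (hj2 : ¬ (j : ℕ) < n + n * m) :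
    construct A m i j = 1 := by
  have hj1 : ¬ (j : ℕ) < n := by omega
  simp only [construct]
  rw [dif_neg hj1, dif_neg hj2, if_neg hi]

lemma main_eq (hm : 0 < m) (S : Matrix (Fin k) (Fin k) F) (σ : Equiv.Perm (Fin n))
    (G H : Matrix (Fin k) (Fin n) F)
    (hcol : ∀ (i : Fin k) (j : Fin n), (∑ l, S i l * G l (σ j)) = H i j)
    (i : Fin (k + 1)) (j : Fin (n + 2 * (n * m) + 1)) :
    (∑ l, liftS S i l * construct G m l (permF n m hm σ j)) = construct H m i j := by
  rw [Fin.sum_univ_castSucc]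
  by_cases hi : (i : ℕ) < k
  · rw [liftS_last S i hi, zero_mul, add_zero]
    by_cases hj1 : (j : ℕ) < n
    · have hv : ((permF n m hm σ j : ℕ)) = (σ ⟨j, hj1⟩ : ℕ) := permF_coe_b1 hm σ j hj1
      have hvn : ((permF n m hm σ j : ℕ)) < n := by rw [hv]; exact (σ ⟨j, hj1⟩).isLt
      have hterm : ∀ t : Fin k, liftS S i (Fin.castSucc t)
          * construct G m (Fin.castSucc t) (permF n m hm σ j)
          = S ⟨i, hi⟩ t * G t (σ ⟨j, hj1⟩) := by
        intro t
        rw [liftS_castSucc S i hi t,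
          construct_b1 G (Fin.castSucc t) _ (by simpa using t.isLt) hvn]
        have h2 : (⟨((permF n m hm σ j : ℕ)), hvn⟩ : Fin n) = σ ⟨j, hj1⟩ := Fin.ext hv
        have hts : ∀ hx : ((Fin.castSucc t : Fin (k + 1)) : ℕ) < k,
            (⟨((Fin.castSucc t : Fin (k + 1)) : ℕ), hx⟩ : Fin k) = t :=
          fun hx => Fin.ext (by simp)
        rw [hts, h2]
      rw [Finset.sum_congr rfl fun t _ => hterm t, hcol ⟨i, hi⟩ ⟨j, hj1⟩,
        construct_b1 H i j hi hj1]
    · by_cases hj2 : (j : ℕ) < n + n * m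
      · have hcb : ((j : ℕ) - n) / m < n := (Nat.div_lt_iff_lt_mul hm).mpr (by omega)
        set c : Fin n := ⟨((j : ℕ) - n) / m, hcb⟩ with hcdef
        have hv : ((permF n m hm σ j : ℕ)) = n + (σ c : ℕ) * m + ((j : ℕ) - n) % m :=
          permF_coe_b2 hm σ j hj1 hj2 hcb
        have hs : (σ c : ℕ) < n := (σ c).isLt
        have hr : ((j : ℕ) - n) % m < m := Nat.mod_lt _ hm
        have hml := middle_lt hs hr
        have hv1 : ¬ ((permF n m hm σ j : ℕ)) < n := by omega
        have hv2 : ((permF n m hm σ j : ℕ)) < n + n * m := by omega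
        have hdiv : ((permF n m hm σ j : ℕ) - n) / m = (σ c : ℕ) := by
          have h1 : (permF n m hm σ j : ℕ) - n = ((j : ℕ) - n) % m + (σ c : ℕ) * m := by
            omega
          rw [h1, Nat.add_mul_div_right _ _ hm, Nat.div_eq_of_lt hr, Nat.zero_add]
        have hdb : ((permF n m hm σ j : ℕ) - n) / m < n := by rw [hdiv]; exact hs
        have hfix : (⟨((permF n m hm σ j : ℕ) - n) / m, hdb⟩ : Fin n) = σ c := Fin.ext hdiv
        have hterm : ∀ t : Fin k, liftS S i (Fin.castSucc t)
            * construct G m (Fin.castSucc t) (permF n m hm σ j)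
            = S ⟨i, hi⟩ t * G t (σ c) := by
          intro t
          rw [liftS_castSucc S i hi t,
            construct_b2 G (Fin.castSucc t) _ (by simpa using t.isLt) hv1 hv2 hdb]
          have hts : ∀ hx : ((Fin.castSucc t : Fin (k + 1)) : ℕ) < k,
              (⟨((Fin.castSucc t : Fin (k + 1)) : ℕ), hx⟩ : Fin k) = t :=
            fun hx => Fin.ext (by simp)
          rw [hts, hfix]
        rw [Finset.sum_congr rfl fun t _ => hterm t, hcol ⟨i, hi⟩ c,
          construct_b2 H i j hi hj1 hj2 hcb]
      · rw [permF_b3 hm σ j hj2]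
        have hterm : ∀ t : Fin k, liftS S i (Fin.castSucc t)
            * construct G m (Fin.castSucc t) j = 0 := by
          intro t
          rw [construct_b3 G (Fin.castSucc t) j (by simpa using t.isLt) hj2, mul_zero]
        rw [Finset.sum_congr rfl fun t _ => hterm t, construct_b3 H i j hi hj2]
        simp
  · have h0 : ∀ t : Fin k, liftS S i (Fin.castSucc t)
        * construct G m (Fin.castSucc t) (permF n m hm σ j) = 0 := by
      intro t; rw [liftS_castSucc' S i hi t, zero_mul]
    rw [Finset.sum_congr rfl fun t _ => h0 t, liftS_last' S i hi, one_mul]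
    have hlast : ¬ ((Fin.last k : Fin (k + 1)) : ℕ) < k := by simp
    by_cases hj1 : (j : ℕ) < n
    · have hv : ((permF n m hm σ j : ℕ)) = (σ ⟨j, hj1⟩ : ℕ) := permF_coe_b1 hm σ j hj1
      have hvn : ((permF n m hm σ j : ℕ)) < n := by rw [hv]; exact (σ ⟨j, hj1⟩).isLt
      rw [construct_b1' G (Fin.last k) _ hlast hvn, construct_b1' H i j hi hj1]
      simp
    · by_cases hj2 : (j : ℕ) < n + n * m
      · have hcb : ((j : ℕ) - n) / m < n := (Nat.div_lt_iff_lt_mul hm).mpr (by omega)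
        have hv : ((permF n m hm σ j : ℕ))
            = n + (σ ⟨((j : ℕ) - n) / m, hcb⟩ : ℕ) * m + ((j : ℕ) - n) % m :=
          permF_coe_b2 hm σ j hj1 hj2 hcb
        have hs : ((σ ⟨((j : ℕ) - n) / m, hcb⟩ : Fin n) : ℕ) < n :=
          (σ ⟨((j : ℕ) - n) / m, hcb⟩).isLt
        have hr : ((j : ℕ) - n) % m < m := Nat.mod_lt _ hm
        have hml := middle_lt hs hr
        have hv1 : ¬ ((permF n m hm σ j : ℕ)) < n := by omega
        have hv2 : ((permF n m hm σ j : ℕ)) < n + n * m := by omega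
        rw [construct_b2' G (Fin.last k) _ hlast hv1 hv2, construct_b2' H i j hi hj1 hj2]
        simp
      · rw [permF_b3 hm σ j hj2, construct_b3' G (Fin.last k) j hlast hj2,
          construct_b3' H i j hi hj2]
        simp

/-- The permutation matrix of `permE`. -/
def permMat (n m : ℕ) (hm : 0 < m) (σ : Equiv.Perm (Fin n)) :
    Matrix (Fin (n + 2 * (n * m) + 1)) (Fin (n + 2 * (n * m) + 1)) F :=
  fun i j => if i = permE n m hm σ j then 1 else 0

lemma main_mul_eq (hm : 0 < m) (S : Matrix (Fin k) (Fin k) F) (σ : Equiv.Perm (Fin n))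
    (G H : Matrix (Fin k) (Fin n) F)
    (hcol : ∀ (i : Fin k) (j : Fin n), (∑ l, S i l * G l (σ j)) = H i j) :
    liftS S * construct G m * permMat (F := F) n m hm σ = construct H m := by
  ext i j
  rw [Matrix.mul_apply]
  have hsum : ∀ l, (liftS S * construct G m) i l * permMat (F := F) n m hm σ l j
      = if l = permE n m hm σ j then (liftS S * construct G m) i l else 0 := by
    intro l
    by_cases hl : l = permE n m hm σ j <;> simp [permMat, hl]
  rw [Finset.sum_congr rfl fun l _ => hsum l, Finset.sum_ite_eq' Finset.univ
    (permE n m hm σ j) (fun l => (liftS S * construct G m) i l)]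
  simp only [Finset.mem_univ, if_true]
  rw [Matrix.mul_apply]
  exact main_eq hm S σ G H hcol i j

end StmtAux

/-- if `(G, H)` is in PCE, then `(G', H')` is in SPCE and in LCE. -/
theorem stmt5 (q k n m : ℕ) (hq : IsPrimePow q) (hk : 0 < k) (hn : 0 < n) (hm : 0 < m)
    (F : Type*) [Field F] [Fintype F] (hF : Fintype.card F = q)
    (G H : Matrix (Fin k) (Fin n) F)
    (h : PCE G H) :
    SPCE (construct G m) (construct H m) ∧ LCE (construct G m) (construct H m) := by
  obtain ⟨S, P, hS, ⟨σ, hP⟩, hSGP⟩ := h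
  have hcol : ∀ (i : Fin k) (j : Fin n), (∑ l, S i l * G l (σ j)) = H i j := by
    intro i j
    have hGP : G * P = fun l j => G l (σ j) := by
      ext l j
      rw [Matrix.mul_apply]
      have hterm : ∀ t, G l t * P t j = if t = σ j then G l t else 0 := by
        intro t
        rw [hP t j]
        by_cases ht : t = σ j <;> simp [ht]
      rw [Finset.sum_congr rfl fun t _ => hterm t,
        Finset.sum_ite_eq' Finset.univ (σ j) (fun t => G l t)]
      simp
    have hij := congrFun (congrFun hSGP i) j
    rw [Matrix.mul_assoc, Matrix.mul_apply] at hij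
    simp only [hGP] at hij
    simpa using hij
  have hmul := main_mul_eq (m := m) hm S σ G H hcol
  have hunit := liftS_isUnit S hS
  constructor
  · exact ⟨liftS S, permMat n m hm σ, hunit,
      ⟨permE n m hm σ, fun _ => 1, fun _ => Or.inl rfl, fun i j => rfl⟩, hmul⟩
  · exact ⟨liftS S, permMat n m hm σ, hunit,
      ⟨permE n m hm σ, fun _ => 1, fun _ => one_ne_zero, fun i j => rfl⟩, hmul⟩
end

section
/- Let q be a prime power and G, H ∈ 𝔽_q^{k×n} be matrices with no zero columns such that G has full row rank k. Let m be a positive integer with m > m_G and m > m_H, and let G', H' ∈ 𝔽_q^{(k+1)×n'} be obtained from G and H by the Construction (with this m). If (G', H') is in LCE, then (G, H) is in PCE. -/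
open scoped Classical

open Matrix Finset

section helpers

variable {k n m : ℕ} {F : Type*} [Field F]

/-- append a scalar at the end of a vector -/
def vcat {k : ℕ} {F : Type*} [Field F] (c : Fin k → F) (a : F) : Fin (k + 1) → F :=
  fun i => if h : (i : ℕ) < k then c ⟨i, h⟩ else a

@[simp] lemma vcat_castSucc (c : Fin k → F) (a : F) (i : Fin k) :
    vcat c a i.castSucc = c i := by
  simp [vcat, i.isLt]

@[simp] lemma vcat_last (c : Fin k → F) (a : F) : vcat c a (Fin.last k) = a := by
  simp [vcat]

lemma vcat_of_lt (c : Fin k → F) (a : F) (i : Fin (k + 1)) (h : (i : ℕ) < k) :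
    vcat c a i = c ⟨i, h⟩ := by simp [vcat, h]

lemma vcat_of_not_lt (c : Fin k → F) (a : F) (i : Fin (k + 1)) (h : ¬ (i : ℕ) < k) :
    vcat c a i = a := by simp [vcat, h]

lemma construct_col1 (A : Matrix (Fin k) (Fin n) F) (m : ℕ)
    (j : Fin (n + 2 * (n * m) + 1)) (hj : (j : ℕ) < n) :
    (fun i => construct A m i j) = vcat (fun i => A i ⟨j, hj⟩) 1 := by
  funext i
  simp only [construct, vcat, dif_pos hj]

lemma construct_col2 (A : Matrix (Fin k) (Fin n) F) (m : ℕ) (hm : 0 < m)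
    (j : Fin (n + 2 * (n * m) + 1)) (hj1 : ¬ (j : ℕ) < n) (hj2 : (j : ℕ) < n + n * m) :
    (fun i => construct A m i j)
      = vcat (fun i => A i ⟨((j : ℕ) - n) / m,
          (Nat.div_lt_iff_lt_mul hm).mpr (by omega)⟩) 0 := by
  funext i
  simp only [construct, vcat, dif_neg hj1, dif_pos hj2]

lemma construct_col3 (A : Matrix (Fin k) (Fin n) F) (m : ℕ)
    (j : Fin (n + 2 * (n * m) + 1)) (hj : ¬ (j : ℕ) < n + n * m) :
    (fun i => construct A m i j) = vcat (0 : Fin k → F) 1 := by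
  have hj1 : ¬ (j : ℕ) < n := by omega
  funext i
  simp only [construct, vcat, dif_neg hj1, dif_neg hj]
  split <;> rfl

/-- projective multiplicity of a column -/
noncomputable def pmult {K N : ℕ} {F : Type*} [Field F]
    (A : Matrix (Fin K) (Fin N) F) (c : Fin K → F) : ℕ :=
  (Finset.univ.filter fun j => ∃ l : F, l ≠ 0 ∧ (fun i => A i j) = l • c).card

lemma pmult_smul {K N : ℕ} (A : Matrix (Fin K) (Fin N) F) (c : Fin K → F)
    {l : F} (hl : l ≠ 0) : pmult A (l • c) = pmult A c := by
  unfold pmult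
  congr 1
  apply Finset.filter_congr
  intro j _
  constructor
  · rintro ⟨t, ht, hcol⟩
    exact ⟨t * l, mul_ne_zero ht hl, by rw [hcol, smul_smul]⟩
  · rintro ⟨t, ht, hcol⟩
    refine ⟨t * l⁻¹, mul_ne_zero ht (inv_ne_zero hl), ?_⟩
    rw [hcol, smul_smul, mul_assoc, inv_mul_cancel₀ hl, mul_one]

lemma card_filter_val_lt (N a : ℕ) (ha : a ≤ N) :
    (Finset.univ.filter fun j : Fin N => (j : ℕ) < a).card = a := by
  have : (Finset.univ.filter fun j : Fin N => (j : ℕ) < a)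
      = (Finset.univ : Finset (Fin a)).map ⟨Fin.castLE ha, Fin.castLE_injective ha⟩ := by
    ext j
    simp only [Finset.mem_filter, Finset.mem_univ, true_and, Finset.mem_map,
      Function.Embedding.coeFn_mk]
    constructor
    · intro hj; exact ⟨⟨j, hj⟩, rfl⟩
    · rintro ⟨b, rfl⟩; exact b.isLt
  rw [this, Finset.card_map, Finset.card_univ, Fintype.card_fin]

lemma card_filter_val_not_lt (N a : ℕ) (ha : a ≤ N) :
    (Finset.univ.filter fun j : Fin N => ¬ (j : ℕ) < a).card = N - a := by
  rw [Finset.filter_not, Finset.card_sdiff_of_subset (Finset.filter_subset _ _),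
    Finset.card_univ, Fintype.card_fin, card_filter_val_lt N a ha]

end helpers

section pconstruct

variable {k n : ℕ} {F : Type*} [Field F]

lemma card_filter_val_between (N a b : ℕ) (hb : b ≤ N) :
    (Finset.univ.filter fun j : Fin N => a ≤ (j : ℕ) ∧ (j : ℕ) < b).card = b - a := by
  have h := Finset.card_bij'
    (s := Finset.univ.filter fun j : Fin N => a ≤ (j : ℕ) ∧ (j : ℕ) < b)
    (t := (Finset.univ : Finset (Fin (b - a))))
    (fun j hj => ⟨(j : ℕ) - a, by
      simp only [Finset.mem_filter, Finset.mem_univ, true_and] at hj; omega⟩)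
    (fun t _ => ⟨a + (t : ℕ), by have := t.isLt; omega⟩)
    (fun j hj => Finset.mem_univ _)
    (fun t _ => by
      simp only [Finset.mem_filter, Finset.mem_univ, true_and]
      have := t.isLt
      exact ⟨by omega, by omega⟩)
    (fun j hj => by
      simp only [Finset.mem_filter, Finset.mem_univ, true_and] at hj
      apply Fin.ext
      show a + ((j : ℕ) - a) = (j : ℕ)
      omega)
    (fun t _ => by
      apply Fin.ext
      show (a + (t : ℕ)) - a = (t : ℕ)
      omega)
  rw [h, Finset.card_univ, Fintype.card_fin]

lemma pmult_construct_e (A : Matrix (Fin k) (Fin n) F) (m : ℕ)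
    (hnz : ∀ j, (fun i => A i j) ≠ 0) :
    pmult (construct A m) (vcat (0 : Fin k → F) 1) = n * m + 1 := by
  unfold pmult
  have hset : (Finset.univ.filter fun j => ∃ l : F, l ≠ 0 ∧
      (fun i => construct A m i j) = l • vcat (0 : Fin k → F) 1)
      = Finset.univ.filter fun j : Fin (n + 2 * (n * m) + 1) => ¬ (j : ℕ) < n + n * m := by
    ext j
    simp only [Finset.mem_filter, Finset.mem_univ, true_and]
    constructor
    · rintro ⟨l, hl, hcol⟩
      by_contra hj
      by_cases h1 : (j : ℕ) < n
      · rw [construct_col1 A m j h1] at hcol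
        apply hnz ⟨j, h1⟩
        funext i
        have := congrFun hcol i.castSucc
        simpa using this
      · have hm : 0 < m := by
          rcases Nat.eq_zero_or_pos m with h | h
          · subst h; omega
          · exact h
        rw [construct_col2 A m hm j h1 (by omega)] at hcol
        have := congrFun hcol (Fin.last k)
        simp at this
        exact hl this.symm
    · intro hj
      refine ⟨1, one_ne_zero, ?_⟩
      rw [construct_col3 A m j hj, one_smul]
  rw [hset, card_filter_val_not_lt _ _ (by omega)]
  omega

lemma pmult_construct_block1 (A : Matrix (Fin k) (Fin n) F) (m : ℕ) (hm : 0 < m)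
    (c : Fin k → F) (hc : c ≠ 0) :
    pmult (construct A m) (vcat c 1) = colCount A c := by
  unfold pmult colCount
  have hle : n ≤ n + 2 * (n * m) + 1 := by omega
  have hset : (Finset.univ.filter fun j => ∃ l : F, l ≠ 0 ∧
      (fun i => construct A m i j) = l • vcat c 1)
      = (Finset.univ.filter fun b : Fin n => (fun i => A i b) = c).map
        ⟨Fin.castLE hle, Fin.castLE_injective hle⟩ := by
    ext j
    simp only [Finset.mem_filter, Finset.mem_univ, true_and, Finset.mem_map,
      Function.Embedding.coeFn_mk]
    constructor
    · rintro ⟨l, hl, hcol⟩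
      by_cases h1 : (j : ℕ) < n
      · rw [construct_col1 A m j h1] at hcol
        have hlast := congrFun hcol (Fin.last k)
        simp at hlast
        refine ⟨⟨j, h1⟩, ?_, Fin.ext rfl⟩
        funext i
        have := congrFun hcol i.castSucc
        simpa [← hlast] using this
      · by_cases h2 : (j : ℕ) < n + n * m
        · rw [construct_col2 A m hm j h1 h2] at hcol
          have := congrFun hcol (Fin.last k)
          simp at this
          exact absurd this.symm hl
        · rw [construct_col3 A m j h2] at hcol
          have hlast := congrFun hcol (Fin.last k)
          simp at hlast
          exfalso
          apply hc
          funext i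
          have := congrFun hcol i.castSucc
          simp [← hlast] at this
          simpa using this.symm
    · rintro ⟨b, hb, rfl⟩
      refine ⟨1, one_ne_zero, ?_⟩
      rw [construct_col1 A m _ (by simpa using b.isLt), one_smul]
      show vcat (fun i => A i b) 1 = vcat c 1
      rw [hb]
  rw [hset, Finset.card_map]

lemma pmult_construct_block2_le (A : Matrix (Fin k) (Fin n) F) (m : ℕ)
    (c : Fin k → F) :
    pmult (construct A m) (vcat c 0) ≤ n * m := by
  unfold pmult
  have hsub : (Finset.univ.filter fun j => ∃ l : F, l ≠ 0 ∧
      (fun i => construct A m i j) = l • vcat c 0)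
      ⊆ Finset.univ.filter fun j : Fin (n + 2 * (n * m) + 1) =>
          n ≤ (j : ℕ) ∧ (j : ℕ) < n + n * m := by
    intro j hj
    simp only [Finset.mem_filter, Finset.mem_univ, true_and] at hj ⊢
    obtain ⟨l, hl, hcol⟩ := hj
    by_cases h1 : (j : ℕ) < n
    · rw [construct_col1 A m j h1] at hcol
      have := congrFun hcol (Fin.last k)
      simp at this
    · by_cases h2 : (j : ℕ) < n + n * m
      · exact ⟨by omega, h2⟩
      · rw [construct_col3 A m j h2] at hcol
        have := congrFun hcol (Fin.last k)
        simp at this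
  refine (Finset.card_le_card hsub).trans ?_
  rw [card_filter_val_between _ n (n + n * m) (by omega)]
  omega

lemma construct_col2' (A : Matrix (Fin k) (Fin n) F) (m : ℕ) (hm : 0 < m)
    (j : Fin (n + 2 * (n * m) + 1)) (hj1 : ¬ (j : ℕ) < n) (hj2 : (j : ℕ) < n + n * m)
    (b : Fin n) (hb : ((j : ℕ) - n) / m = (b : ℕ)) :
    (fun i => construct A m i j) = vcat (fun i => A i b) 0 := by
  rw [construct_col2 A m hm j hj1 hj2]
  funext i
  simp only [vcat]
  split
  · exact congrArg _ (Fin.ext hb)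
  · rfl

lemma pmult_construct_block2_ge (A : Matrix (Fin k) (Fin n) F) (m : ℕ) (hm : 0 < m)
    (b : Fin n) :
    m ≤ pmult (construct A m) (vcat (fun i => A i b) 0) := by
  unfold pmult
  have h1 : ((b : ℕ) + 1) * m ≤ n * m := Nat.mul_le_mul_right m b.isLt
  rw [Nat.succ_mul] at h1
  have hbound : ∀ t : Fin m, n + (b : ℕ) * m + (t : ℕ) < n + 2 * (n * m) + 1 := by
    intro t
    have := t.isLt
    omega
  have key : ∀ t : Fin m,
      (⟨n + (b : ℕ) * m + (t : ℕ), hbound t⟩ : Fin (n + 2 * (n * m) + 1)) ∈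
        Finset.univ.filter fun j => ∃ l : F, l ≠ 0 ∧
          (fun i => construct A m i j) = l • vcat (fun i => A i b) 0 := by
    intro t
    simp only [Finset.mem_filter, Finset.mem_univ, true_and]
    refine ⟨1, one_ne_zero, ?_⟩
    have ht := t.isLt
    rw [construct_col2' A m hm _ (by show ¬ n + (b : ℕ) * m + (t : ℕ) < n; omega)
      (by show n + (b : ℕ) * m + (t : ℕ) < n + n * m; omega) b ?_, one_smul]
    show ((n + (b : ℕ) * m + (t : ℕ)) - n) / m = (b : ℕ)
    have h2 : (n + (b : ℕ) * m + (t : ℕ)) - n = (t : ℕ) + (b : ℕ) * m := by omega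
    rw [h2, Nat.add_mul_div_right _ _ hm, Nat.div_eq_of_lt t.isLt, zero_add]
  have hcard := Finset.card_le_card_of_injOn (s := (Finset.univ : Finset (Fin m)))
    (fun t : Fin m => (⟨n + (b : ℕ) * m + (t : ℕ), hbound t⟩ : Fin (n + 2 * (n * m) + 1)))
    (fun t _ => key t) (by
      intro t1 _ t2 _ hteq
      have h2 : n + (b : ℕ) * m + (t1 : ℕ) = n + (b : ℕ) * m + (t2 : ℕ) :=
        congrArg Fin.val hteq
      exact Fin.ext (by omega))
  simpa using hcard

lemma colCount_le_maxColCount [Fintype F] (A : Matrix (Fin k) (Fin n) F) (c : Fin k → F) :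
    colCount A c ≤ maxColCount A :=
  Finset.le_sup (Finset.mem_univ c)

lemma vecMul_eq_zero_of_rank (G : Matrix (Fin k) (Fin n) F)
    (hG : G.rank = k) (r : Fin k → F) (h : Matrix.vecMul r G = 0) : r = 0 := by
  have hr : LinearMap.range G.mulVecLin = ⊤ := by
    apply Submodule.eq_top_of_finrank_eq
    rw [Module.finrank_fin_fun]
    exact hG
  funext i
  have h2 : ∀ y : Fin k → F, r ⬝ᵥ y = 0 := by
    intro y
    obtain ⟨x, hx⟩ := (LinearMap.range_eq_top.mp hr) y
    rw [← hx, Matrix.mulVecLin_apply, Matrix.dotProduct_mulVec, h, zero_dotProduct]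
  have := h2 (Pi.single i 1)
  simpa using this

end pconstruct

section selflemmas

variable {k n : ℕ} {F : Type*} [Field F]

lemma pmult_construct_self_block1 (A : Matrix (Fin k) (Fin n) F) (m : ℕ) (hm : 0 < m)
    (hnz : ∀ j, (fun i => A i j) ≠ 0) (j : Fin (n + 2 * (n * m) + 1)) (h1 : (j : ℕ) < n) :
    pmult (construct A m) (fun i => construct A m i j)
      = colCount A (fun i => A i ⟨j, h1⟩) := by
  rw [construct_col1 A m j h1]
  exact pmult_construct_block1 A m hm _ (hnz _)

lemma pmult_construct_self_block2_le (A : Matrix (Fin k) (Fin n) F) (m : ℕ) (hm : 0 < m)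
    (j : Fin (n + 2 * (n * m) + 1)) (hj1 : ¬ (j : ℕ) < n) (hj2 : (j : ℕ) < n + n * m) :
    pmult (construct A m) (fun i => construct A m i j) ≤ n * m := by
  rw [construct_col2 A m hm j hj1 hj2]
  exact pmult_construct_block2_le A m _

lemma pmult_construct_self_block2_ge (A : Matrix (Fin k) (Fin n) F) (m : ℕ) (hm : 0 < m)
    (j : Fin (n + 2 * (n * m) + 1)) (hj1 : ¬ (j : ℕ) < n) (hj2 : (j : ℕ) < n + n * m) :
    m ≤ pmult (construct A m) (fun i => construct A m i j) := by
  rw [construct_col2' A m hm j hj1 hj2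
    ⟨((j : ℕ) - n) / m, (Nat.div_lt_iff_lt_mul hm).mpr (by omega)⟩ rfl]
  exact pmult_construct_block2_ge A m hm _

lemma pmult_construct_self_block3 (A : Matrix (Fin k) (Fin n) F) (m : ℕ)
    (hnz : ∀ j, (fun i => A i j) ≠ 0)
    (j : Fin (n + 2 * (n * m) + 1)) (hj : ¬ (j : ℕ) < n + n * m) :
    pmult (construct A m) (fun i => construct A m i j) = n * m + 1 := by
  rw [construct_col3 A m j hj]
  exact pmult_construct_e A m hnz

end selflemmas

theorem stmt10_aux (q k n m : ℕ) (hq : IsPrimePow q) (hk : 0 < k) (hn : 0 < n) (hm : 0 < m)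
    (F : Type*) [Field F] [Fintype F] (hF : Fintype.card F = q)
    (G H : Matrix (Fin k) (Fin n) F)
    (hGnz : ∀ j, (fun i => G i j) ≠ 0)
    (hHnz : ∀ j, (fun i => H i j) ≠ 0)
    (hGrank : G.rank = k)
    (hmG : maxColCount G < m) (hmH : maxColCount H < m)
    (S : Matrix (Fin (k+1)) (Fin (k+1)) F) (P : Matrix (Fin (n + 2*(n*m)+1)) (Fin (n + 2*(n*m)+1)) F)
    (hS : IsUnit S) (σ : Equiv.Perm (Fin (n + 2*(n*m)+1))) (d : Fin (n + 2*(n*m)+1) → F)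
    (hd : ∀ j, d j ≠ 0) (hP : ∀ i j, P i j = if i = σ j then d j else 0)
    (heq : S * construct G m * P = construct H m) :
    PCE G H := by
  classical
  have hnm1 : m ≤ n * m := Nat.le_mul_of_pos_left m hn
  have hSinj : Function.Injective S.mulVec := Matrix.mulVec_injective_iff_isUnit.mpr hS
  -- column relation
  have colrel : ∀ j, (fun i => construct H m i j)
      = d j • S.mulVec (fun i => construct G m i (σ j)) := by
    intro j
    funext i
    have hij : construct H m i j = (S * construct G m * P) i j := by rw [heq]
    rw [Matrix.mul_apply] at hij
    simp only [hP, mul_ite, mul_zero] at hij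
    rw [Finset.sum_ite_eq' Finset.univ (σ j)] at hij
    simp only [Finset.mem_univ, if_true] at hij
    rw [hij, Pi.smul_apply, smul_eq_mul, mul_comm]
    congr 1
  -- pmult transfer
  have htrans : ∀ c : Fin (k+1) → F,
      pmult (construct H m) (S.mulVec c) = pmult (construct G m) c := by
    intro c
    unfold pmult
    apply Finset.card_equiv σ
    intro j
    simp only [Finset.mem_filter, Finset.mem_univ, true_and]
    constructor
    · rintro ⟨l, hl, hcol⟩
      refine ⟨(d j)⁻¹ * l, mul_ne_zero (inv_ne_zero (hd j)) hl, ?_⟩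
      apply hSinj
      rw [Matrix.mulVec_smul, ← smul_smul]
      rw [colrel j] at hcol
      rw [← hcol, smul_smul, inv_mul_cancel₀ (hd j), one_smul]
    · rintro ⟨l, hl, hcol⟩
      refine ⟨d j * l, mul_ne_zero (hd j) hl, ?_⟩
      rw [colrel j, hcol, Matrix.mulVec_smul, smul_smul]
  have feq : ∀ j, pmult (construct H m) (fun i => construct H m i j)
      = pmult (construct G m) (fun i => construct G m i (σ j)) := by
    intro j
    rw [colrel j, pmult_smul _ _ (hd j), htrans]
  -- Step B : S maps e to a multiple of e
  have hGe : pmult (construct G m) (vcat (0 : Fin k → F) 1) = n * m + 1 :=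
    pmult_construct_e G m hGnz
  have hHe : pmult (construct H m) (vcat (0 : Fin k → F) 1) = n * m + 1 :=
    pmult_construct_e H m hHnz
  have hfe : pmult (construct H m) (S.mulVec (vcat (0 : Fin k → F) 1)) = n * m + 1 := by
    rw [htrans]; exact hGe
  have hpos : 0 < pmult (construct H m) (S.mulVec (vcat (0 : Fin k → F) 1)) := by
    omega
  unfold pmult at hpos
  obtain ⟨j0, hj0mem⟩ := Finset.card_pos.mp hpos
  simp only [Finset.mem_filter, Finset.mem_univ, true_and] at hj0mem
  obtain ⟨l0, hl0, hcol0⟩ := hj0mem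
  have he1 : pmult (construct H m) (fun i => construct H m i j0) = n * m + 1 := by
    rw [hcol0, pmult_smul _ _ hl0, hfe]
  have hj0b : ¬ (j0 : ℕ) < n + n * m := by
    intro hcase
    by_cases h1 : (j0 : ℕ) < n
    · rw [pmult_construct_self_block1 H m hm hHnz j0 h1] at he1
      have h2 := colCount_le_maxColCount H (fun i => H i ⟨j0, h1⟩)
      omega
    · have h2 := pmult_construct_self_block2_le H m hm j0 h1 hcase
      omega
  have hSe : S.mulVec (vcat (0 : Fin k → F) 1) = l0⁻¹ • vcat (0 : Fin k → F) 1 := by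
    have hcol0' : vcat (0 : Fin k → F) 1 = l0 • S.mulVec (vcat (0 : Fin k → F) 1) :=
      (construct_col3 H m j0 hj0b).symm.trans hcol0
    have h2 := congrArg (fun v => l0⁻¹ • v) hcol0'
    simp only [smul_smul, inv_mul_cancel₀ hl0, one_smul] at h2
    exact h2.symm
  set μ : F := l0⁻¹ with hμdef
  have hμ : μ ≠ 0 := inv_ne_zero hl0
  have hee : vcat (0 : Fin k → F) 1 = Pi.single (Fin.last k) (1 : F) := by
    funext i
    rcases Fin.eq_castSucc_or_eq_last i with ⟨i', rfl⟩ | rfl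
    · rw [vcat_castSucc, Pi.zero_apply, Pi.single_eq_of_ne (Fin.castSucc_lt_last i').ne]
    · rw [vcat_last, Pi.single_eq_same]
  rw [hee] at hSe
  rw [Matrix.mulVec_single] at hSe
  have hScs : ∀ i : Fin k, S i.castSucc (Fin.last k) = 0 := by
    intro i
    have h2 := congrFun hSe i.castSucc
    simpa [Pi.single_eq_of_ne (Fin.castSucc_lt_last i).ne] using h2
  have hSll : S (Fin.last k) (Fin.last k) = μ := by
    have h2 := congrFun hSe (Fin.last k)
    simpa using h2
  -- Step C : last row of S vanishes on the first k coordinates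
  have hrow : ∀ i : Fin k, S (Fin.last k) i.castSucc = 0 := by
    have hrG : Matrix.vecMul (fun i : Fin k => S (Fin.last k) i.castSucc) G = 0 := by
      funext c
      have hb1 : ((c : ℕ) + 1) * m ≤ n * m := Nat.mul_le_mul_right m c.isLt
      rw [Nat.succ_mul] at hb1
      obtain ⟨b, hbval⟩ : ∃ b : Fin (n + 2 * (n * m) + 1), (b : ℕ) = n + (c : ℕ) * m :=
        ⟨⟨n + (c : ℕ) * m, by omega⟩, rfl⟩
      have hbn : ¬ (b : ℕ) < n := by omega
      have hbnm : (b : ℕ) < n + n * m := by omega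
      have hσb : σ (σ.symm b) = b := Equiv.apply_symm_apply σ b
      have hGb : (fun i => construct G m i b) = vcat (fun i => G i c) 0 :=
        construct_col2' G m hm b hbn hbnm c (by
          rw [hbval, Nat.add_sub_cancel_left]
          exact Nat.mul_div_cancel (c : ℕ) hm)
      have hfj : pmult (construct H m) (fun i => construct H m i (σ.symm b))
          = pmult (construct G m) (fun i => construct G m i b) := by
        rw [feq (σ.symm b), hσb]
      have hpb_ge : m ≤ pmult (construct G m) (fun i => construct G m i b) :=
        pmult_construct_self_block2_ge G m hm b hbn hbnm
      have hpb_le : pmult (construct G m) (fun i => construct G m i b) ≤ n * m :=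
        pmult_construct_self_block2_le G m hm b hbn hbnm
      -- σ.symm b lies in block 2 of H'
      have hjn : ¬ ((σ.symm b : Fin (n + 2 * (n * m) + 1)) : ℕ) < n := by
        intro h1
        rw [pmult_construct_self_block1 H m hm hHnz _ h1] at hfj
        have h2 := colCount_le_maxColCount H (fun i => H i ⟨(σ.symm b : Fin _), h1⟩)
        omega
      have hj2 : ((σ.symm b : Fin (n + 2 * (n * m) + 1)) : ℕ) < n + n * m := by
        by_contra h1
        rw [pmult_construct_self_block3 H m hHnz _ h1] at hfj
        omega
      -- last coordinate is zero
      have hL : construct H m (Fin.last k) (σ.symm b) = 0 := by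
        have h2 := congrFun (construct_col2 H m hm (σ.symm b) hjn hj2) (Fin.last k)
        simpa using h2
      have h3 := congrFun (colrel (σ.symm b)) (Fin.last k)
      simp only [Pi.smul_apply, smul_eq_mul] at h3
      rw [hσb, hGb] at h3
      rw [hL] at h3
      have h4 : (S.mulVec (vcat (fun i => G i c) 0)) (Fin.last k) = 0 := by
        rcases mul_eq_zero.mp h3.symm with h5 | h5
        · exact absurd h5 (hd _)
        · exact h5
      have h6 : (S.mulVec (vcat (fun i => G i c) 0)) (Fin.last k)
          = ∑ i : Fin k, S (Fin.last k) i.castSucc * G i c := by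
        simp only [Matrix.mulVec, dotProduct]
        rw [Fin.sum_univ_castSucc]
        simp only [vcat_castSucc, vcat_last, mul_zero, add_zero]
      rw [h6] at h4
      simpa [Matrix.vecMul, dotProduct] using h4
    intro i
    exact congrFun (vecMul_eq_zero_of_rank G hGrank _ hrG) i
  -- Step D : block 1 maps to block 1
  have hcn : ∀ c : Fin n, (c : ℕ) < n + 2 * (n * m) + 1 := by
    intro c; have := c.isLt; omega
  have hcb : ∀ c : Fin n,
      ((σ.symm ⟨(c : ℕ), hcn c⟩ : Fin (n + 2 * (n * m) + 1)) : ℕ) < n := by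
    intro c
    have hσc : σ (σ.symm ⟨(c : ℕ), hcn c⟩) = ⟨(c : ℕ), hcn c⟩ :=
      Equiv.apply_symm_apply σ _
    have hfj : pmult (construct H m) (fun i => construct H m i (σ.symm ⟨(c : ℕ), hcn c⟩))
        = pmult (construct G m) (fun i => construct G m i (⟨(c : ℕ), hcn c⟩ : Fin _)) := by
      rw [feq _, hσc]
    rw [pmult_construct_self_block1 G m hm hGnz _ c.isLt] at hfj
    have hcc := colCount_le_maxColCount G (fun i => G i ⟨((⟨(c : ℕ), hcn c⟩ : Fin (n + 2 * (n * m) + 1)) : ℕ), c.isLt⟩)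
    by_contra h1
    by_cases h2 : ((σ.symm ⟨(c : ℕ), hcn c⟩ : Fin (n + 2 * (n * m) + 1)) : ℕ) < n + n * m
    · have h3 := pmult_construct_self_block2_ge H m hm _ h1 h2
      omega
    · rw [pmult_construct_self_block3 H m hHnz _ h2] at hfj
      omega
  set π : Fin n → Fin n :=
    fun c => ⟨((σ.symm ⟨(c : ℕ), hcn c⟩ : Fin (n + 2 * (n * m) + 1)) : ℕ), hcb c⟩ with hπdef
  have hπval : ∀ c : Fin n, ((π c : Fin n) : ℕ)
      = ((σ.symm ⟨(c : ℕ), hcn c⟩ : Fin (n + 2 * (n * m) + 1)) : ℕ) := by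
    intro c; rw [hπdef]
  have hπinj : Function.Injective π := by
    intro c1 c2 hcc
    have h2 : (σ.symm ⟨(c1 : ℕ), hcn c1⟩ : Fin (n + 2 * (n * m) + 1))
        = σ.symm ⟨(c2 : ℕ), hcn c2⟩ :=
      Fin.ext (by rw [← hπval c1, ← hπval c2, hcc])
    have h3 := σ.symm.injective h2
    have h4 := congrArg Fin.val h3
    simp only [Fin.mk.injEq] at h4 ⊢
    exact Fin.ext h4
  have hπbij := Finite.injective_iff_bijective.mp hπinj
  -- Step E : entry equations
  have hμinv : ∀ c : Fin n, d (σ.symm ⟨(c : ℕ), hcn c⟩) * μ = 1 ∧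
      ∀ i : Fin k, H i (π c) = d (σ.symm ⟨(c : ℕ), hcn c⟩) *
        ∑ l : Fin k, S i.castSucc l.castSucc * G l c := by
    intro c
    have hσc : σ (σ.symm ⟨(c : ℕ), hcn c⟩) = ⟨(c : ℕ), hcn c⟩ :=
      Equiv.apply_symm_apply σ _
    have hGc : (fun i => construct G m i (⟨(c : ℕ), hcn c⟩ : Fin (n + 2 * (n * m) + 1)))
        = vcat (fun i => G i c) 1 :=
      construct_col1 G m _ c.isLt
    have hHc : (fun i => construct H m i (σ.symm ⟨(c : ℕ), hcn c⟩))
        = vcat (fun i => H i (π c)) 1 :=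
      construct_col1 H m _ (hcb c)
    have h3 := colrel (σ.symm ⟨(c : ℕ), hcn c⟩)
    rw [hσc, hGc, hHc] at h3
    constructor
    · have h4 := congrFun h3 (Fin.last k)
      simp only [Pi.smul_apply, smul_eq_mul, vcat_last] at h4
      -- h4 : 1 = d j * (S *ᵥ vcat (G col c) 1) last
      have h5 : (S.mulVec (vcat (fun i => G i c) 1)) (Fin.last k) = μ := by
        simp only [Matrix.mulVec, dotProduct]
        rw [Fin.sum_univ_castSucc]
        simp only [vcat_castSucc, vcat_last, mul_one]
        rw [hSll]
        have h6 : ∀ i : Fin k, S (Fin.last k) i.castSucc * G i c = 0 := by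
          intro i; rw [hrow i, zero_mul]
        rw [Finset.sum_congr rfl (fun i _ => h6 i), Finset.sum_const_zero, zero_add]
      rw [h5] at h4
      exact h4.symm
    · intro i
      have h4 := congrFun h3 i.castSucc
      simp only [Pi.smul_apply, smul_eq_mul, vcat_castSucc] at h4
      have h5 : (S.mulVec (vcat (fun i => G i c) 1)) i.castSucc
          = ∑ l : Fin k, S i.castSucc l.castSucc * G l c := by
        simp only [Matrix.mulVec, dotProduct]
        rw [Fin.sum_univ_castSucc]
        simp only [vcat_castSucc, vcat_last, mul_one]
        rw [hScs i, add_zero]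
      rw [h5] at h4
      exact h4
  -- the small matrix
  set S0 : Matrix (Fin k) (Fin k) F := S.submatrix Fin.castSucc Fin.castSucc with hS0def
  set S' : Matrix (Fin k) (Fin k) F := μ⁻¹ • S0 with hS'def
  have hS0unit : IsUnit S0 := by
    rw [← Matrix.mulVec_injective_iff_isUnit]
    have hker : ∀ v, S0.mulVec v = 0 → v = 0 := by
      intro v hv
      have hw : S.mulVec (vcat v 0) = 0 := by
        funext a
        rcases Fin.eq_castSucc_or_eq_last a with ⟨i, rfl⟩ | rfl
        · have hvi := congrFun hv i
          simp only [Matrix.mulVec, dotProduct, Pi.zero_apply, hS0def,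
            Matrix.submatrix_apply] at hvi ⊢
          rw [Fin.sum_univ_castSucc]
          simp only [vcat_castSucc, vcat_last, mul_zero, add_zero]
          exact hvi
        · simp only [Matrix.mulVec, dotProduct, Pi.zero_apply]
          rw [Fin.sum_univ_castSucc]
          simp only [vcat_castSucc, vcat_last, mul_zero, add_zero]
          have h6 : ∀ i : Fin k, S (Fin.last k) i.castSucc * v i = 0 := by
            intro i; rw [hrow i, zero_mul]
          rw [Finset.sum_congr rfl (fun i _ => h6 i), Finset.sum_const_zero]
      have h7 : S.mulVec (vcat v 0) = S.mulVec 0 := by rw [hw, Matrix.mulVec_zero]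
      have h8 := hSinj h7
      funext i
      have h9 := congrFun h8 i.castSucc
      simpa using h9
    intro x y hxy
    have h10 : S0.mulVec (x - y) = 0 := by
      rw [Matrix.mulVec_sub, hxy, sub_self]
    have h11 := hker _ h10
    exact sub_eq_zero.mp h11
  have hS'unit : IsUnit S' := by
    rw [Matrix.isUnit_iff_isUnit_det, hS'def, Matrix.det_smul]
    exact IsUnit.mul (IsUnit.pow _ (Ne.isUnit (inv_ne_zero hμ)))
      ((Matrix.isUnit_iff_isUnit_det S0).mp hS0unit)
  -- assemble the permutation equivalence
  set τ : Equiv.Perm (Fin n) := Equiv.ofBijective π hπbij with hτdef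
  refine ⟨S', Matrix.of fun a b => if a = τ.symm b then (1 : F) else 0,
    hS'unit, ⟨τ.symm, fun i j => rfl⟩, ?_⟩
  funext i j
  rw [Matrix.mul_apply]
  simp only [Matrix.of_apply, mul_ite, mul_one, mul_zero]
  rw [Finset.sum_ite_eq' Finset.univ (τ.symm j)]
  simp only [Finset.mem_univ, if_true]
  rw [Matrix.mul_apply]
  -- goal : ∑ l, S' i l * G l (τ.symm j) = H i j
  obtain ⟨hdj, hentry⟩ := hμinv (τ.symm j)
  have hπτ : π (τ.symm j) = j := τ.apply_symm_apply j
  have h12 := hentry i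
  rw [hπτ] at h12
  rw [h12]
  have hdval : d (σ.symm ⟨((τ.symm j : Fin n) : ℕ), hcn (τ.symm j)⟩) = μ⁻¹ :=
    eq_inv_of_mul_eq_one_left hdj
  rw [hdval, Finset.mul_sum]
  apply Finset.sum_congr rfl
  intro l _
  simp only [hS'def, hS0def, Matrix.smul_apply, Matrix.submatrix_apply, smul_eq_mul, mul_assoc]

/-- if `(G', H')` is in LCE, then `(G, H)` is in PCE. -/
theorem stmt10 (q k n m : ℕ) (hq : IsPrimePow q) (hk : 0 < k) (hn : 0 < n) (hm : 0 < m)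
    (F : Type*) [Field F] [Fintype F] (hF : Fintype.card F = q)
    (G H : Matrix (Fin k) (Fin n) F)
    (hGnz : ∀ j, (fun i => G i j) ≠ 0)
    (hHnz : ∀ j, (fun i => H i j) ≠ 0)
    (hGrank : G.rank = k)
    (hmG : maxColCount G < m) (hmH : maxColCount H < m)
    (h : LCE (construct G m) (construct H m)) :
    PCE G H := by
  obtain ⟨S, P, hS, ⟨σ, d, hd, hP⟩, heq⟩ := h
  exact stmt10_aux q k n m hq hk hn hm F hF G H hGnz hHnz hGrank hmG hmH S P hS σ d hd hP heq
end
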